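/- arXiv:2301.09699 — 4 statements merged into one kernel-verified Lean document; each statement's English description precedes it below -/
import Mathlib

section
/- For every real number x > 0, the series ∑_{n=0}^∞ |C(x,n)| converges, where C(x,n) is the generalized binomial coefficient. -/
/-!
For `n ≥ x` the recursion `(n + 1) C(x, n+1) = (x - n) C(x, n)` gives
`x |C(x,n)| = n |C(x,n)| - (n+1) |C(x,n+1)|`, so beyond `⌈x⌉` the partial sums of `x |C(x,n)|`
telescope and are bounded by `⌈x⌉ |C(x,⌈x⌉)|`.
-/

/-- The generalized binomial coefficient `C(x, n) = x (x-1) ⋯ (x-n+1) / n!`. -/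
noncomputable def genBinom (x : ℝ) (n : ℕ) : ℝ :=
  (∏ i ∈ Finset.range n, (x - i)) / (Nat.factorial n : ℝ)

open Finset

theorem summable_of_mul_le_sub_succ {f g : ℕ → ℝ} {c : ℝ} (hc : 0 < c) (hf : ∀ n, 0 ≤ f n)
    (hg : ∀ n, 0 ≤ g n) (h : ∀ n, c * f n ≤ g n - g (n + 1)) : Summable f := by
  refine summable_of_sum_range_le (c := g 0 / c) hf fun m => ?_
  rw [le_div_iff₀ hc]
  calc (∑ n ∈ range m, f n) * c = ∑ n ∈ range m, c * f n := by
        rw [sum_mul]; simp only [mul_comm]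
    _ ≤ ∑ n ∈ range m, (g n - g (n + 1)) := sum_le_sum fun n _ => h n
    _ = g 0 - g m := sum_range_sub' g m
    _ ≤ g 0 := by linarith [hg m]

theorem genBinom_succ (x : ℝ) (n : ℕ) :
    genBinom x (n + 1) = genBinom x n * (x - n) / (n + 1) := by
  unfold genBinom
  rw [prod_range_succ, Nat.factorial_succ]
  push_cast
  field_simp

theorem succ_mul_abs_genBinom_succ {x : ℝ} {n : ℕ} (hxn : x ≤ n) :
    (n + 1) * |genBinom x (n + 1)| = (n - x) * |genBinom x n| := by
  rw [genBinom_succ, abs_div, abs_mul, abs_sub_comm, abs_of_nonneg (sub_nonneg.2 hxn),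
    abs_of_pos (by positivity : (0 : ℝ) < n + 1)]
  field_simp

theorem summable_abs_genBinom (x : ℝ) (hx : 0 < x) :
    Summable (fun n : ℕ => |genBinom x n|) := by
  set N := ⌈x⌉₊
  rw [← summable_nat_add_iff N]
  refine summable_of_mul_le_sub_succ (g := fun n => ((n + N : ℕ) : ℝ) * |genBinom x (n + N)|)
    hx (fun n => abs_nonneg _) (fun n => by positivity) fun n => ?_
  have hxn : x ≤ (n + N : ℕ) := (Nat.le_ceil x).trans (by exact_mod_cast Nat.le_add_left N n)
  have hstep := succ_mul_abs_genBinom_succ hxn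
  simp only [Nat.add_right_comm n 1 N]
  push_cast at hstep ⊢
  linarith
end

section
/- The series ∑_{n=2}^∞ (n-2)! · ∑_{k=1}^n (-1)^{k+1} / ((n-k)! · k^k) converges, and -1 plus its sum equals γ, the Euler–Mascheroni constant. -/
/-!
Put `u = t e^{-t}`. Since `∫₀^∞ e^{-t} u^j dt = j! / (j+1)^{j+1}`, expanding `(1 - u)^{n-1}`
binomially shows that the `n`-th term of the series equals `∫₀^∞ e^{-t} (1 - u)^{n-1} / (n-1) dt`.
These integrands are nonnegative and sum to `e^{-t} (-log u) = e^{-t} (t - log t)`, whose integral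
is `Γ(2) - Γ'(1) = 1 + γ`.
-/

open MeasureTheory Set Filter Real Finset
open scoped Nat

theorem MeasureTheory.hasSum_integral_of_nonneg {α : Type*} [MeasurableSpace α]
    {μ : Measure α} {ι : Type*} [Countable ι] {F : ι → α → ℝ} {f : α → ℝ}
    (hF_meas : ∀ i, AEStronglyMeasurable (F i) μ) (hF_nonneg : ∀ i, ∀ᵐ a ∂μ, 0 ≤ F i a)
    (hf : Integrable f μ) (h_sum : ∀ᵐ a ∂μ, HasSum (fun i ↦ F i a) (f a)) :
    HasSum (fun i ↦ ∫ a, F i a ∂μ) (∫ a, f a ∂μ) :=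
  hasSum_integral_of_dominated_convergence F hF_meas
    (fun i ↦ (hF_nonneg i).mono fun _ ha ↦ (Real.norm_of_nonneg ha).le)
    (h_sum.mono fun _ ha ↦ ha.summable) (hf.congr (h_sum.mono fun _ ha ↦ ha.tsum_eq.symm)) h_sum

namespace Real

lemma integrableOn_pow_mul_exp_neg_mul (j : ℕ) {r : ℝ} (hr : 0 < r) :
    IntegrableOn (fun t ↦ t ^ j * exp (-(r * t))) (Ioi 0) := by
  have := integrableOn_rpow_mul_exp_neg_mul_rpow (s := j) (p := 1)
    (neg_one_lt_zero.trans_le j.cast_nonneg) one_pos hr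
  simpa [rpow_natCast] using this

lemma integral_pow_mul_exp_neg_mul (j : ℕ) {r : ℝ} (hr : 0 < r) :
    ∫ t in Ioi 0, t ^ j * exp (-(r * t)) = j ! / r ^ (j + 1) := by
  have := integral_rpow_mul_exp_neg_mul_Ioi (a := j + 1) (by positivity) hr
  rw [Gamma_nat_eq_factorial, ← Nat.cast_add_one, rpow_natCast] at this
  simp only [Nat.cast_add_one, add_sub_cancel_right, rpow_natCast] at this
  rw [this, one_div_pow]
  ring

lemma abs_log_le_rpow {t : ℝ} (ht : 0 < t) :
    |log t| ≤ 2 * t ^ (-(1 / 2) : ℝ) + 2 * t ^ (1 / 2 : ℝ) := by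
  have hpos := log_le_rpow_div ht.le (ε := 1 / 2) (by norm_num)
  have hneg := log_le_rpow_div (inv_nonneg.2 ht.le) (ε := 1 / 2) (by norm_num)
  rw [log_inv, inv_rpow ht.le, ← rpow_neg ht.le] at hneg
  have := rpow_pos_of_pos ht (-(1 / 2))
  have := rpow_pos_of_pos ht (1 / 2)
  rw [abs_le]
  constructor <;> linarith

lemma integrableOn_log_mul_exp_neg : IntegrableOn (fun t ↦ log t * exp (-t)) (Ioi 0) := by
  have hbound : IntegrableOn
      (fun t ↦ 2 * (exp (-t) * t ^ ((1 / 2 : ℝ) - 1)) + 2 * (exp (-t) * t ^ ((3 / 2 : ℝ) - 1)))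
      (Ioi 0) :=
    ((GammaIntegral_convergent (by norm_num)).const_mul 2).add
      ((GammaIntegral_convergent (by norm_num)).const_mul 2)
  refine hbound.mono' (by fun_prop) ((ae_restrict_iff' measurableSet_Ioi).2 (ae_of_all _ ?_))
  intro t ht
  rw [norm_mul, norm_eq_abs, norm_of_nonneg (exp_pos _).le]
  have := abs_log_le_rpow ht
  norm_num at this ⊢
  nlinarith [exp_pos (-t)]

lemma exp_neg_mul_mul_exp_neg_pow (t : ℝ) (j : ℕ) :
    exp (-t) * (t * exp (-t)) ^ j = t ^ j * exp (-((j + 1) * t)) := by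
  rw [mul_pow, ← exp_nat_mul, mul_left_comm, ← exp_add]
  ring_nf

lemma integrableOn_exp_neg_mul_mul_exp_neg_pow (j : ℕ) :
    IntegrableOn (fun t ↦ exp (-t) * (t * exp (-t)) ^ j) (Ioi 0) := by
  simpa only [exp_neg_mul_mul_exp_neg_pow] using
    integrableOn_pow_mul_exp_neg_mul j (r := j + 1) (by positivity)

lemma integral_exp_neg_mul_mul_exp_neg_pow (j : ℕ) :
    ∫ t in Ioi 0, exp (-t) * (t * exp (-t)) ^ j = j ! / ((j : ℝ) + 1) ^ (j + 1) := by
  simpa only [exp_neg_mul_mul_exp_neg_pow] using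
    integral_pow_mul_exp_neg_mul j (r := j + 1) (by positivity)

lemma exp_neg_mul_one_sub_mul_exp_neg_pow (t : ℝ) (p : ℕ) :
    exp (-t) * (1 - t * exp (-t)) ^ p =
      ∑ j ∈ range (p + 1), (-1) ^ j * p.choose j * (exp (-t) * (t * exp (-t)) ^ j) := by
  rw [sub_eq_neg_add, add_pow, mul_sum]
  refine sum_congr rfl fun j _ ↦ ?_
  rw [neg_pow]
  ring

lemma integral_exp_neg_mul_one_sub_mul_exp_neg_pow (p : ℕ) :
    ∫ t in Ioi 0, exp (-t) * (1 - t * exp (-t)) ^ p =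
      ∑ j ∈ range (p + 1), (-1) ^ j * p.choose j * (j ! / ((j : ℝ) + 1) ^ (j + 1)) := by
  simp only [exp_neg_mul_one_sub_mul_exp_neg_pow]
  rw [integral_finsetSum _ fun j _ ↦ (integrableOn_exp_neg_mul_mul_exp_neg_pow j).const_mul _]
  simp only [integral_const_mul, integral_exp_neg_mul_mul_exp_neg_pow]

lemma integral_log_mul_exp_neg : ∫ t in Ioi 0, log t * exp (-t) = -eulerMascheroniConstant := by
  have hGammaIntegral := Complex.hasDerivAt_GammaIntegral (s := 1) (by norm_num)
  simp only [sub_self, Complex.cpow_zero, one_mul, ← Complex.ofReal_mul,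
    integral_complex_ofReal] at hGammaIntegral
  have hGamma : HasDerivAt Complex.Gamma (∫ t in Ioi 0, log t * exp (-t) : ℝ) 1 := by
    refine hGammaIntegral.congr_of_eventuallyEq ?_
    filter_upwards [(isOpen_lt continuous_const Complex.continuous_re).mem_nhds
      (by norm_num : (0 : ℝ) < (1 : ℂ).re)] with s hs
    exact Complex.Gamma_eq_integral hs
  have hGammaReal : HasDerivAt Gamma (∫ t in Ioi 0, log t * exp (-t)) 1 := by
    simpa [Complex.Gamma_ofReal] using hGamma.real_of_complex
  exact hGammaReal.unique hasDerivAt_Gamma_one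

lemma mul_exp_neg_lt_one (t : ℝ) : t * exp (-t) < 1 :=
  (mul_exp_neg_le_exp_neg_one t).trans_lt (exp_lt_one_iff.2 neg_one_lt_zero)

lemma hasSum_exp_neg_mul_one_sub_mul_exp_neg_pow_div {t : ℝ} (ht : 0 < t) :
    HasSum (fun m : ℕ ↦ exp (-t) * ((1 - t * exp (-t)) ^ (m + 1) / (m + 1)))
      (exp (-t) * (t - log t)) := by
  have hu : 0 < t * exp (-t) := by positivity
  have hx : |1 - t * exp (-t)| < 1 := by
    rw [abs_lt]
    constructor <;> linarith [mul_exp_neg_lt_one t]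
  have hlog : -log (1 - (1 - t * exp (-t))) = t - log t := by
    rw [sub_sub_cancel, log_mul ht.ne' (exp_pos _).ne', log_exp]
    ring
  simpa only [hlog] using (hasSum_pow_div_log_of_abs_lt_one hx).mul_left (exp (-t))

lemma integrableOn_and_integral_exp_neg_mul_sub_log :
    IntegrableOn (fun t ↦ exp (-t) * (t - log t)) (Ioi 0) ∧
      ∫ t in Ioi 0, exp (-t) * (t - log t) = 1 + eulerMascheroniConstant := by
  have hid : ∀ t, exp (-t) * (t - log t) = t ^ 1 * exp (-(1 * t)) - log t * exp (-t) := by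
    intro t
    ring_nf
  have hint := integrableOn_pow_mul_exp_neg_mul 1 one_pos
  simp only [hid]
  refine ⟨hint.sub integrableOn_log_mul_exp_neg, ?_⟩
  rw [integral_sub hint integrableOn_log_mul_exp_neg, integral_pow_mul_exp_neg_mul 1 one_pos,
    integral_log_mul_exp_neg]
  norm_num

end Real

theorem Finset.sum_Icc_eq_sum_range {M : Type*} [AddCommMonoid M] (f : ℕ → M) (a b : ℕ) :
    ∑ n ∈ Icc a b, f n = ∑ i ∈ range (b + 1 - a), f (a + i) := by
  rw [← Ico_add_one_right_eq_Icc, sum_Ico_eq_sum_range]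

namespace EulerMascheroniSeries

noncomputable def term (n : ℕ) : ℝ :=
  (n - 2)! * ∑ k ∈ Icc 1 n, (-1) ^ (k + 1) / ((n - k)! * (k : ℝ) ^ k)

lemma term_add_two (m : ℕ) :
    term (m + 2) = (∑ j ∈ range (m + 2),
      (-1) ^ j * (m + 1).choose j * (j ! / ((j : ℝ) + 1) ^ (j + 1))) / (m + 1) := by
  rw [term, Nat.add_sub_cancel, sum_Icc_eq_sum_range, mul_sum, sum_div]
  refine sum_congr rfl fun j hj ↦ ?_
  have hj : j ≤ m + 1 := by rw [Finset.mem_range] at hj; omega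
  rw [show m + 2 - (1 + j) = m + 1 - j by omega, Nat.cast_choose ℝ hj, Nat.factorial_succ]
  push_cast
  field_simp
  ring

lemma term_add_two_eq_integral (m : ℕ) :
    term (m + 2) = ∫ t in Ioi 0, exp (-t) * ((1 - t * exp (-t)) ^ (m + 1) / (m + 1)) := by
  simp only [← mul_div_assoc]
  rw [integral_div, integral_exp_neg_mul_one_sub_mul_exp_neg_pow, term_add_two]

lemma hasSum_term : HasSum (fun m ↦ term (m + 2)) (1 + eulerMascheroniConstant) := by
  obtain ⟨hint, hval⟩ := integrableOn_and_integral_exp_neg_mul_sub_log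
  simp only [term_add_two_eq_integral]
  rw [← hval]
  refine hasSum_integral_of_nonneg (fun m ↦ by fun_prop) (fun m ↦ ?_) hint
    ((ae_restrict_iff' measurableSet_Ioi).2 (ae_of_all _
      fun t ht ↦ hasSum_exp_neg_mul_one_sub_mul_exp_neg_pow_div ht))
  refine ae_of_all _ fun t ↦ ?_
  have hx : 0 ≤ 1 - t * exp (-t) := by linarith [mul_exp_neg_lt_one t]
  positivity

end EulerMascheroniSeries

open EulerMascheroniSeries in
theorem rational_series_eulerMascheroni :
    ∃ S : ℝ,
      Filter.Tendsto
        (fun N => ∑ n ∈ Finset.Icc 2 N, (Nat.factorial (n - 2) : ℝ) *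
          ∑ k ∈ Finset.Icc 1 n,
            (-1) ^ (k + 1) / ((Nat.factorial (n - k) : ℝ) * (k : ℝ) ^ k))
        Filter.atTop (nhds S) ∧
      -1 + S = Real.eulerMascheroniConstant := by
  refine ⟨1 + eulerMascheroniConstant, ?_, by ring⟩
  refine (hasSum_term.tendsto_sum_nat.comp (tendsto_sub_atTop_nat 1)).congr fun N ↦ ?_
  change ∑ m ∈ range (N - 1), term (m + 2) = ∑ n ∈ Icc 2 N, term n
  rw [sum_Icc_eq_sum_range, show N + 1 - 2 = N - 1 by omega]
  simp only [add_comm 2]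
end

section
/- For all integers N ≥ 1 and 1 ≤ k ≤ N, ∑_{n=k}^N (-1)^n · (N+n-1)! / ((n-k)! · (k+n-1)! · (N+1-n)!) = (-1)^N · (2N)! / ((N+k)! · (N+1-k)!). -/
/-!
Substituting `n = k + m` and putting `M = N + 1 - k`, the summand becomes
`(-1)^k (N-k)!/M!` times `(-1)^m C(M, m) C(m + N + k - 1, N - k)`. Extended to `0 ≤ m ≤ M`, this
alternating sum is the `M`-th forward difference of the degree-`(N - k)` polynomial
`x ↦ C(x + N + k - 1, N - k)`, hence vanishes; so the sum over `m < M` is minus its `m = M` term,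
which is the right-hand side.
-/

open Finset Nat

theorem fwdDiff_iter_choose_eq_zero_of_lt {d M : ℕ} (h : d < M) :
    (fwdDiff 1)^[M] (fun x ↦ x.choose d : ℕ → ℤ) = 0 := by
  obtain ⟨r, rfl⟩ := Nat.exists_eq_add_of_lt h
  have hd := fwdDiff_iter_choose 0 d
  rw [add_zero] at hd
  rw [add_assoc, add_comm, Function.iterate_add_apply, hd, Function.iterate_succ_apply]
  simp only [choose_zero_right, cast_one, fwdDiff_const]
  exact Function.iterate_fixed (fwdDiff_const 1 0) r

theorem sum_range_neg_one_pow_mul_choose_mul_choose_add_eq_zero {R : Type*} [CommRing R]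
    {d M : ℕ} (h : d < M) (a : ℕ) :
    ∑ m ∈ range (M + 1), (-1 : R) ^ m * M.choose m * (m + a).choose d = 0 := by
  have hdiff := fwdDiff_iter_eq_sum_shift 1 (fun x ↦ (x.choose d : ℤ)) M a
  rw [fwdDiff_iter_choose_eq_zero_of_lt h] at hdiff
  have hZ : ∑ m ∈ range (M + 1), (-1 : ℤ) ^ (M - m) * M.choose m * (m + a).choose d = 0 := by
    simpa [add_comm] using hdiff.symm
  have hR : ∑ m ∈ range (M + 1), (-1 : R) ^ (M - m) * M.choose m * (m + a).choose d = 0 := by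
    simpa using congrArg (Int.cast : ℤ → R) hZ
  have hsign : ∀ m ∈ range (M + 1), (-1 : R) ^ m = (-1) ^ M * (-1) ^ (M - m) := fun m hm ↦ by
    rw [← pow_add, show M + (M - m) = m + 2 * (M - m) by grind, pow_add, pow_mul, neg_one_sq,
      one_pow, mul_one]
  rw [sum_congr rfl fun m hm ↦ by rw [hsign m hm, mul_assoc, mul_assoc], ← mul_sum]
  simp only [mul_assoc] at hR
  rw [hR, mul_zero]

theorem cast_choose_mul_choose_mul_factorial_div_factorial {K : Type*} [Field K] [CharZero K]
    {m M a d : ℕ} (hm : m ≤ M) (hd : d ≤ m + a) :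
    (M.choose m * (m + a).choose d : K) * d ! / M ! =
      (m + a)! / (m ! * (M - m)! * (m + a - d)!) := by
  rw [cast_choose K hm, cast_choose K hd]
  field_simp [factorial_ne_zero]

theorem sum_range_neg_one_pow_mul_factorial_div {K : Type*} [Field K] [CharZero K]
    {d M a : ℕ} (h : d < M) (hd : d ≤ a) :
    ∑ m ∈ range M, (-1 : K) ^ m * (m + a)! / (m ! * (M - m)! * (m + a - d)!) =
      -(-1) ^ M * (M + a)! / (M ! * (M + a - d)!) := by
  have hzero := sum_range_neg_one_pow_mul_choose_mul_choose_add_eq_zero (R := K) h a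
  have hterm : ∀ m ∈ range (M + 1), (-1 : K) ^ m * (m + a)! / (m ! * (M - m)! * (m + a - d)!) =
      d ! / M ! * ((-1 : K) ^ m * M.choose m * (m + a).choose d) := fun m hm ↦ by
    rw [mul_div_assoc,
      ← cast_choose_mul_choose_mul_factorial_div_factorial (mem_range_succ_iff.mp hm) (by omega)]
    ring
  have hsum : ∑ m ∈ range (M + 1),
      (-1 : K) ^ m * (m + a)! / (m ! * (M - m)! * (m + a - d)!) = 0 := by
    rw [sum_congr rfl hterm, ← mul_sum, hzero, mul_zero]
  rw [sum_range_succ, Nat.sub_self, factorial_zero, cast_one, mul_one] at hsum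
  linear_combination hsum

theorem inner_sum_identity_general (N k : ℕ) (hk : 1 ≤ k) (hkN : k ≤ N) :
    ∑ n ∈ Finset.Icc k N,
        (-1 : ℝ) ^ n * (Nat.factorial (N + n - 1) : ℝ) /
          ((Nat.factorial (n - k) : ℝ) * (Nat.factorial (k + n - 1) : ℝ) *
            (Nat.factorial (N + 1 - n) : ℝ)) =
      (-1 : ℝ) ^ N * (Nat.factorial (2 * N) : ℝ) /
        ((Nat.factorial (N + k) : ℝ) * (Nat.factorial (N + 1 - k) : ℝ)) := by
  have hterm : ∀ m ∈ range (N + 1 - k),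
      (-1 : ℝ) ^ (k + m) * (N + (k + m) - 1)! /
          ((k + m - k)! * (k + (k + m) - 1)! * (N + 1 - (k + m))!) =
        (-1) ^ k * ((-1) ^ m * (m + (N + k - 1))! /
          (m ! * (N + 1 - k - m)! * (m + (N + k - 1) - (N - k))!)) := fun m _ ↦ by
    rw [show N + (k + m) - 1 = m + (N + k - 1) by omega, add_tsub_cancel_left,
      show k + (k + m) - 1 = m + (N + k - 1) - (N - k) by omega, Nat.sub_add_eq, pow_add]
    ring
  have hsign : (-1 : ℝ) ^ k * -(-1) ^ (N + 1 - k) = (-1) ^ N := by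
    rw [mul_neg, ← pow_add, show k + (N + 1 - k) = N + 1 by omega, pow_succ]
    ring
  rw [← Ico_add_one_right_eq_Icc, sum_Ico_eq_sum_range, sum_congr rfl hterm, ← mul_sum,
    sum_range_neg_one_pow_mul_factorial_div (by omega) (by omega),
    show N + 1 - k + (N + k - 1) = 2 * N by omega, show 2 * N - (N - k) = N + k by omega,
    ← hsign]
  ring

theorem inner_sum_identity (N k : ℕ) (hN : 1 ≤ N) (hk : 1 ≤ k) (hkN : k ≤ N) :
    ∑ n ∈ Finset.Icc k N,
        (-1 : ℝ) ^ n * (Nat.factorial (N + n - 1) : ℝ) /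
          ((Nat.factorial (n - k) : ℝ) * (Nat.factorial (k + n - 1) : ℝ) *
            (Nat.factorial (N + 1 - n) : ℝ)) =
      (-1 : ℝ) ^ N * (Nat.factorial (2 * N) : ℝ) /
        ((Nat.factorial (N + k) : ℝ) * (Nat.factorial (N + 1 - k) : ℝ)) :=
  inner_sum_identity_general N k hk hkN
end

section
/- For every real number x, the series S(x) = ∑_{n=1}^∞ [(-1)^n / (2n-1)] · p_n(x) · ∑_{k=1}^n [(-1)^k · (2k-1) / ((n-k)! · (k+n-1)!)] · ln k converges absolutely, where p_n(x) = x · ∏_{k=1}^{n-1} (x² - k²). -/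
/-- `p_n(x) = x · ∏_{k=1}^{n-1} (x² - k²)`. -/
noncomputable def lambdaP (n : ℕ) (x : ℝ) : ℝ :=
  x * ∏ k ∈ Finset.Icc 1 (n - 1), (x ^ 2 - (k : ℝ) ^ 2)

/-- The `n`-th term of the series `S(x)` defining the `Λ` function. -/
noncomputable def lambdaTerm (n : ℕ) (x : ℝ) : ℝ :=
  ((-1) ^ n / (2 * (n : ℝ) - 1)) * lambdaP n x *
    ∑ k ∈ Finset.Icc 1 n,
      ((-1) ^ k * (2 * (k : ℝ) - 1) /
          ((Nat.factorial (n - k) : ℝ) * (Nat.factorial (k + n - 1) : ℝ))) *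
        Real.log (k : ℝ)

/-!
The partial sums of the inner coefficients `c n k` have the closed form
`(n - 1) · ∑_{k ≤ i} c n k = (-1)^i · i · (n - i) / ((n - i)! (i + n - 1)!)`, so they add up to `0`
and summation by parts against `log k`, whose increments are at most `1 / k`, bounds the inner sum
by `∑_i 1 / ((n - i)! (i + n - 1)!) ≤ 2^(2n-1) / (2n-1)!`. With `|p_n(x)| ≤ |x| e^{2x²} ((n-1)!)²`
the `(m+1)`-st term is `O(4^m / (m² · centralBinom m))`, which is `O(m^{-3/2})` because
`16^m ≤ (4m + 1) · centralBinom m ^ 2`.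
-/

open Finset Real
open scoped Nat

lemma prod_Icc_natCast_sq (N : ℕ) : ∏ k ∈ Icc 1 N, (k : ℝ) ^ 2 = (N ! : ℝ) ^ 2 := by
  rw [prod_pow, ← Nat.cast_prod, ← Ico_add_one_right_eq_Icc, prod_Ico_id_eq_factorial]

lemma sum_Icc_inv_sq_le_two (N : ℕ) : ∑ k ∈ Icc 1 N, ((k : ℝ) ^ 2)⁻¹ ≤ 2 := by
  have h := sum_Ioo_inv_sq_le (α := ℝ) 0 (N + 1)
  have hIoo : Ioo 0 (N + 1) = Icc 1 N := by
    ext; simp only [mem_Ioo, mem_Icc]; omega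
  simpa [hIoo] using h

lemma abs_lambdaP_le (n : ℕ) (x : ℝ) :
    |lambdaP n x| ≤ |x| * exp (2 * x ^ 2) * ((n - 1)! : ℝ) ^ 2 := by
  have hfactor : ∀ k ∈ Icc 1 (n - 1),
      |x ^ 2 - (k : ℝ) ^ 2| ≤ (k : ℝ) ^ 2 * (1 + x ^ 2 / k ^ 2) := by
    intro k hk
    have hk : (0 : ℝ) < k := by exact_mod_cast (mem_Icc.1 hk).1
    rw [mul_one_add, mul_div_cancel₀ _ (by positivity), abs_le]
    constructor <;> nlinarith [sq_nonneg x]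
  have hexp : x ^ 2 * ∑ k ∈ Icc 1 (n - 1), ((k : ℝ) ^ 2)⁻¹ ≤ 2 * x ^ 2 := by
    linarith [mul_le_mul_of_nonneg_left (sum_Icc_inv_sq_le_two (n - 1)) (sq_nonneg x)]
  calc |lambdaP n x| = |x| * ∏ k ∈ Icc 1 (n - 1), |x ^ 2 - (k : ℝ) ^ 2| := by
        rw [lambdaP, abs_mul, abs_prod]
    _ ≤ |x| * ∏ k ∈ Icc 1 (n - 1), ((k : ℝ) ^ 2 * (1 + x ^ 2 / k ^ 2)) := by
        gcongr with k hk
        exact hfactor k hk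
    _ = |x| * ((n - 1)! : ℝ) ^ 2 * ∏ k ∈ Icc 1 (n - 1), (1 + x ^ 2 / k ^ 2) := by
        rw [prod_mul_distrib, prod_Icc_natCast_sq, mul_assoc]
    _ ≤ |x| * ((n - 1)! : ℝ) ^ 2 * exp (2 * x ^ 2) := by
        gcongr
        refine (prod_one_add_le_exp_sum _ fun k ↦ by positivity).trans (exp_le_exp.2 ?_)
        simpa only [div_eq_mul_inv, ← mul_sum] using hexp
    _ = |x| * exp (2 * x ^ 2) * ((n - 1)! : ℝ) ^ 2 := by ring

noncomputable def lambdaCoeff (n k : ℕ) : ℝ :=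
  (-1) ^ k * (2 * (k : ℝ) - 1) / ((n - k)! * (k + n - 1)!)

lemma lambdaTerm_eq (n : ℕ) (x : ℝ) :
    lambdaTerm n x = (-1) ^ n / (2 * (n : ℝ) - 1) * lambdaP n x *
      ∑ k ∈ Icc 1 n, lambdaCoeff n k * log k := rfl

lemma sub_one_mul_sum_lambdaCoeff {n i : ℕ} (hi : i ≤ n) :
    ((n : ℝ) - 1) * ∑ k ∈ Icc 1 i, lambdaCoeff n k
      = (-1) ^ i * i * ((n : ℝ) - i) / ((n - i)! * (i + n - 1)!) := by
  induction i with
  | zero => simp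
  | succ i ih =>
    obtain ⟨j, rfl⟩ : ∃ j, n = i + 1 + j := ⟨n - (i + 1), by omega⟩
    rw [sum_Icc_succ_top (by omega), mul_add, ih (by omega), lambdaCoeff]
    rw [show i + 1 + j - i = j + 1 by omega, show i + 1 + j - (i + 1) = j by omega,
      show i + (i + 1 + j) - 1 = 2 * i + j by omega,
      show i + 1 + (i + 1 + j) - 1 = 2 * i + j + 1 by omega,
      Nat.factorial_succ j, Nat.factorial_succ (2 * i + j)]
    push_cast
    field_simp
    ring

lemma sum_lambdaCoeff_eq_zero {n : ℕ} (hn : 2 ≤ n) : ∑ k ∈ Icc 1 n, lambdaCoeff n k = 0 := by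
  have h := sub_one_mul_sum_lambdaCoeff (le_refl n)
  rw [sub_self, mul_zero, zero_div] at h
  have hn' : (n : ℝ) - 1 ≠ 0 := by
    have : (2 : ℝ) ≤ n := by exact_mod_cast hn
    linarith
  exact (mul_eq_zero.1 h).resolve_left hn'

lemma abs_sum_lambdaCoeff_le {n i : ℕ} (hi : 1 ≤ i) (hin : i < n) :
    |∑ k ∈ Icc 1 i, lambdaCoeff n k| ≤ i / ((n - i)! * (i + n - 1)! : ℝ) := by
  have hi' : (1 : ℝ) ≤ i := by exact_mod_cast hi
  have hin' : (i : ℝ) < n := by exact_mod_cast hin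
  have hD : (0 : ℝ) < (n - i)! * (i + n - 1)! := by positivity
  calc |∑ k ∈ Icc 1 i, lambdaCoeff n k|
      = |((n : ℝ) - 1) * ∑ k ∈ Icc 1 i, lambdaCoeff n k| / ((n : ℝ) - 1) := by
        rw [abs_mul, abs_of_pos (a := (n : ℝ) - 1) (by linarith),
          mul_div_cancel_left₀ _ (by linarith)]
    _ = i / ((n - i)! * (i + n - 1)! : ℝ) * (((n : ℝ) - i) / ((n : ℝ) - 1)) := by
        rw [sub_one_mul_sum_lambdaCoeff hin.le, abs_div, abs_mul, abs_mul, abs_pow, abs_neg,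
          abs_one, one_pow, one_mul, Nat.abs_cast, abs_of_pos hD, abs_of_pos (by linarith)]
        ring
    _ ≤ i / ((n - i)! * (i + n - 1)! : ℝ) := by
        exact mul_le_of_le_one_right (by positivity) ((div_le_one (by linarith)).2 (by linarith))

lemma sum_Icc_mul_eq_sub_sum_range {R : Type*} [CommRing R] (c g : ℕ → R) (n : ℕ) :
    ∑ k ∈ Icc 1 n, c k * g k =
      (∑ k ∈ Icc 1 n, c k) * g n -
        ∑ i ∈ range n, (∑ k ∈ Icc 1 i, c k) * (g (i + 1) - g i) := by
  induction n with
  | zero => simp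
  | succ n ih =>
    rw [sum_Icc_succ_top (by omega), sum_Icc_succ_top (by omega), sum_range_succ, ih]
    ring

lemma abs_log_succ_sub_log_le {i : ℕ} (hi : 0 < i) :
    |log ((i + 1 : ℕ) : ℝ) - log i| ≤ 1 / i := by
  have hi' : (0 : ℝ) < i := by exact_mod_cast hi
  rw [Nat.cast_succ, ← log_div (by positivity) hi'.ne',
    abs_of_nonneg (log_nonneg ((one_le_div hi').2 (by linarith)))]
  calc log ((i + 1) / i) ≤ (i + 1) / i - 1 := log_le_sub_one_of_pos (by positivity)
    _ = 1 / i := by field_simp; ring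

lemma abs_sum_lambdaCoeff_mul_log_le (n : ℕ) :
    |∑ k ∈ Icc 1 n, lambdaCoeff n k * log k|
      ≤ ∑ i ∈ range n, ((n - i)! * (i + n - 1)! : ℝ)⁻¹ := by
  have hlast : (∑ k ∈ Icc 1 n, lambdaCoeff n k) * log n = 0 := by
    rcases lt_or_ge n 2 with hn | hn
    · interval_cases n <;> simp
    · rw [sum_lambdaCoeff_eq_zero hn, zero_mul]
  rw [sum_Icc_mul_eq_sub_sum_range _ (fun k : ℕ ↦ log k), hlast, zero_sub, abs_neg]
  refine (abs_sum_le_sum_abs _ _).trans (sum_le_sum fun i hi ↦ ?_)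
  rcases Nat.eq_zero_or_pos i with rfl | hi0
  · rw [Icc_eq_empty (by omega), sum_empty, zero_mul, abs_zero]
    positivity
  calc |(∑ k ∈ Icc 1 i, lambdaCoeff n k) * (log ((i + 1 : ℕ) : ℝ) - log i)|
      ≤ i / ((n - i)! * (i + n - 1)! : ℝ) * (1 / i) := by
        rw [abs_mul]
        exact mul_le_mul (abs_sum_lambdaCoeff_le hi0 (mem_range.1 hi))
          (abs_log_succ_sub_log_le hi0) (abs_nonneg _) (by positivity)
    _ = ((n - i)! * (i + n - 1)! : ℝ)⁻¹ := by
        have : (i : ℝ) ≠ 0 := by exact_mod_cast hi0.ne'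
        field_simp

lemma sum_range_choose_add_le_two_pow (n : ℕ) :
    ∑ i ∈ range n, (2 * n - 1).choose (i + n - 1) ≤ 2 ^ (2 * n - 1) := by
  calc ∑ i ∈ range n, (2 * n - 1).choose (i + n - 1)
      = ∑ j ∈ Ico (n - 1) (2 * n - 1), (2 * n - 1).choose j := by
        rw [sum_Ico_eq_sum_range, show 2 * n - 1 - (n - 1) = n by omega]
        exact sum_congr rfl fun i hi ↦ by rw [mem_range] at hi; congr 1; omega
    _ ≤ ∑ j ∈ range (2 * n - 1 + 1), (2 * n - 1).choose j :=
        sum_le_sum_of_subset_of_nonneg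
          (fun j hj ↦ by simp only [mem_Ico, mem_range] at hj ⊢; omega) fun _ _ _ ↦ by positivity
    _ = 2 ^ (2 * n - 1) := Nat.sum_range_choose _

lemma sum_range_inv_factorial_mul_le (n : ℕ) :
    ∑ i ∈ range n, ((n - i)! * (i + n - 1)! : ℝ)⁻¹ ≤ 2 ^ (2 * n - 1) / (2 * n - 1)! := by
  have hterm : ∀ i ∈ range n,
      ((n - i)! * (i + n - 1)! : ℝ)⁻¹ = (2 * n - 1).choose (i + n - 1) / (2 * n - 1)! := by
    intro i hi
    rw [mem_range] at hi
    have h := Nat.choose_mul_factorial_mul_factorial (by omega : i + n - 1 ≤ 2 * n - 1)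
    rw [show 2 * n - 1 - (i + n - 1) = n - i by omega] at h
    rw [eq_div_iff (by positivity), ← h]
    push_cast
    field_simp
  rw [sum_congr rfl hterm, ← sum_div]
  gcongr
  exact_mod_cast sum_range_choose_add_le_two_pow n

lemma four_pow_sq_le_mul_centralBinom_sq (m : ℕ) :
    (4 ^ m) ^ 2 ≤ (4 * m + 1) * m.centralBinom ^ 2 := by
  induction m with
  | zero => simp
  | succ m ih =>
    have hrec := Nat.succ_mul_centralBinom_succ m
    have hpoly :
        16 * (m + 1) ^ 2 * (4 * m + 1) ≤ (4 * (m + 1) + 1) * (2 * (2 * m + 1)) ^ 2 := by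
      ring_nf; omega
    refine Nat.le_of_mul_le_mul_left (c := (m + 1) ^ 2) ?_ (by positivity)
    calc (m + 1) ^ 2 * (4 ^ (m + 1)) ^ 2 = 16 * (m + 1) ^ 2 * (4 ^ m) ^ 2 := by ring
      _ ≤ 16 * (m + 1) ^ 2 * ((4 * m + 1) * m.centralBinom ^ 2) := by gcongr
      _ ≤ (4 * (m + 1) + 1) * (2 * (2 * m + 1)) ^ 2 * m.centralBinom ^ 2 := by
        rw [← mul_assoc]; gcongr
      _ = (4 * (m + 1) + 1) * ((m + 1) * (m + 1).centralBinom) ^ 2 := by rw [hrec]; ring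
      _ = (m + 1) ^ 2 * ((4 * (m + 1) + 1) * (m + 1).centralBinom ^ 2) := by ring

lemma four_pow_le_two_mul_sqrt_mul_centralBinom (m : ℕ) :
    (4 : ℝ) ^ m ≤ 2 * √(m + 1) * m.centralBinom := by
  have h : ((4 : ℝ) ^ m) ^ 2 ≤ (4 * m + 1) * m.centralBinom ^ 2 := by
    exact_mod_cast four_pow_sq_le_mul_centralBinom_sq m
  refine le_of_sq_le_sq ?_ (by positivity)
  rw [mul_pow, mul_pow, sq_sqrt (by positivity)]
  nlinarith [sq_nonneg (m.centralBinom : ℝ)]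

lemma four_pow_div_sq_mul_centralBinom_le (m : ℕ) :
    (4 : ℝ) ^ m / ((2 * m + 1) ^ 2 * m.centralBinom) ≤ 2 * ((m : ℝ) + 1) ^ (-(3 / 2) : ℝ) := by
  have hm : (0 : ℝ) < m + 1 := by positivity
  have hcb : (0 : ℝ) < m.centralBinom := by exact_mod_cast m.centralBinom_pos
  calc (4 : ℝ) ^ m / ((2 * m + 1) ^ 2 * m.centralBinom)
      ≤ 2 * √(m + 1) * m.centralBinom / ((m + 1) ^ 2 * m.centralBinom) := by
        gcongr
        · exact four_pow_le_two_mul_sqrt_mul_centralBinom m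
        · linarith
    _ = 2 * ((m : ℝ) + 1) ^ (-(3 / 2) : ℝ) := by
        rw [mul_div_mul_right _ _ hcb.ne', sqrt_eq_rpow, mul_div_assoc, ← rpow_two, ← rpow_sub hm]
        norm_num

lemma factorial_two_mul_add_one (m : ℕ) :
    (2 * m + 1)! = (2 * m + 1) * m.centralBinom * m ! ^ 2 := by
  have h := Nat.choose_mul_factorial_mul_factorial (by omega : m ≤ 2 * m)
  rw [show 2 * m - m = m by omega] at h
  rw [Nat.factorial_succ, ← h, Nat.centralBinom_eq_two_mul_choose]
  ring

lemma abs_lambdaTerm_succ_le (m : ℕ) (x : ℝ) :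
    |lambdaTerm (m + 1) x|
      ≤ 2 * (|x| * exp (2 * x ^ 2)) * ((4 : ℝ) ^ m / ((2 * m + 1) ^ 2 * m.centralBinom)) := by
  have hsign : |(-1 : ℝ) ^ (m + 1) / (2 * ((m + 1 : ℕ) : ℝ) - 1)| = 1 / (2 * m + 1) := by
    rw [abs_div, abs_pow, abs_neg, abs_one, one_pow]
    push_cast
    rw [abs_of_pos (by linarith)]
    ring_nf
  have hS :=
    (abs_sum_lambdaCoeff_mul_log_le (m + 1)).trans (sum_range_inv_factorial_mul_le (m + 1))
  rw [show 2 * (m + 1) - 1 = 2 * m + 1 by omega, factorial_two_mul_add_one] at hS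
  have hP := abs_lambdaP_le (m + 1) x
  rw [Nat.add_sub_cancel] at hP
  rw [lambdaTerm_eq, abs_mul, abs_mul, hsign]
  calc 1 / (2 * m + 1) * |lambdaP (m + 1) x|
        * |∑ k ∈ Icc 1 (m + 1), lambdaCoeff (m + 1) k * log k|
      ≤ 1 / (2 * m + 1) * (|x| * exp (2 * x ^ 2) * (m ! : ℝ) ^ 2)
        * (2 ^ (2 * m + 1) / ((2 * m + 1) * m.centralBinom * m ! ^ 2 : ℕ)) := by gcongr
    _ = 2 * (|x| * exp (2 * x ^ 2)) * ((4 : ℝ) ^ m / ((2 * m + 1) ^ 2 * m.centralBinom)) := by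
      have : (m ! : ℝ) ≠ 0 := by positivity
      have : (m.centralBinom : ℝ) ≠ 0 := by exact_mod_cast m.centralBinom_ne_zero
      rw [pow_succ (2 : ℝ), pow_mul]
      push_cast
      field_simp
      ring

theorem lambda_series_converges_absolutely (x : ℝ) :
    Summable (fun n : ℕ => |lambdaTerm (n + 1) x|) := by
  set K := |x| * exp (2 * x ^ 2)
  have hdecay : Summable fun m : ℕ ↦ ((m : ℝ) + 1) ^ (-(3 / 2) : ℝ) := by
    simpa using (summable_nat_add_iff 1).2 (summable_nat_rpow.2 (by norm_num : -(3 / 2 : ℝ) < -1))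
  refine .of_nonneg_of_le (fun _ ↦ abs_nonneg _) (fun m ↦ ?_) (hdecay.mul_left (4 * K))
  calc |lambdaTerm (m + 1) x|
      ≤ 2 * K * ((4 : ℝ) ^ m / ((2 * m + 1) ^ 2 * m.centralBinom)) := abs_lambdaTerm_succ_le m x
    _ ≤ 2 * K * (2 * ((m : ℝ) + 1) ^ (-(3 / 2) : ℝ)) := by
        gcongr; exact four_pow_div_sq_mul_centralBinom_le m
    _ = 4 * K * ((m : ℝ) + 1) ^ (-(3 / 2) : ℝ) := by ring
end
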